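/- Let p = 2 and let ρ be a positive C¹ function on Ω which is weakly superharmonic, i.e. ∫_Ω ⟨∇ρ, ∇φ⟩ dx ≥ 0 for every nonnegative φ ∈ C_c^1(Ω). Suppose Λ > 0 is such that Λ ∫_Ω ρ u² dx ≤ ∫_Ω ρ |∇u|² dx for every u ∈ C_c^1(Ω). Then the Hardy inequality with remainder term ∫_Ω |∇u|² dx ≥ (1/4) ∫_Ω (u²/ρ²) |∇ρ|² dx + Λ ∫_Ω u² dx holds for every u ∈ C_c^1(Ω). -/

import Mathlib

/-!
Ground state substitution: write `u = √ρ v` with `v = u / √ρ`. Pointwise,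
`|∇u|² = ρ |∇v|² + ½ ⟨∇ρ, ∇(v²)⟩ + ¼ (u² / ρ²) |∇ρ|²`.
After integration, the middle term is nonnegative since `ρ` is weakly superharmonic and `v²`
is a nonnegative test function, and the first term is at least `Λ ∫ ρ v² = Λ ∫ u²` by the
weighted inequality applied to `v`.
-/

open MeasureTheory Filter Topology
open scoped RealInnerProductSpace Gradient

section Gradient

variable {F : Type*} [NormedAddCommGroup F] [InnerProductSpace ℝ F] [CompleteSpace F]
  {f g : F → ℝ} {f' g' x : F} {s : Set F}

theorem HasGradientAt.mul (hf : HasGradientAt f f' x) (hg : HasGradientAt g g' x) :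
    HasGradientAt (fun y => f y * g y) (f x • g' + g x • f') x := by
  rw [hasGradientAt_iff_hasFDerivAt] at *
  simp only [map_add, map_smul]
  exact hf.mul hg

theorem HasGradientAt.sqrt (hf : HasGradientAt f f' x) (hx : f x ≠ 0) :
    HasGradientAt (fun y => √(f y)) ((1 / (2 * √(f x))) • f') x := by
  rw [hasGradientAt_iff_hasFDerivAt] at *
  rw [map_smul]
  exact (Real.hasDerivAt_sqrt hx).comp_hasFDerivAt x hf

theorem gradient_of_notMem_tsupport (hx : x ∉ tsupport f) : ∇ f x = 0 := by
  simp [gradient, fderiv_of_notMem_tsupport ℝ hx]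

theorem ContDiffOn.continuousOn_gradient (hf : ContDiffOn ℝ 1 f s) (hs : IsOpen s) :
    ContinuousOn (∇ f) s :=
  (InnerProductSpace.toDual ℝ F).symm.continuous.comp_continuousOn
    (hf.continuousOn_fderiv_of_isOpen hs le_rfl)

theorem ContDiff.continuous_gradient (hf : ContDiff ℝ 1 f) : Continuous (∇ f) :=
  (InnerProductSpace.toDual ℝ F).symm.continuous.comp (hf.continuous_fderiv one_ne_zero)

theorem norm_gradient_sq_eq_of_eventuallyEq_sqrt_mul {ρ u v : F → ℝ}
    (hρ : DifferentiableAt ℝ ρ x) (hρx : 0 < ρ x) (hv : DifferentiableAt ℝ v x)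
    (huv : u =ᶠ[𝓝 x] fun y => √(ρ y) * v y) :
    ‖∇ u x‖ ^ 2 = ρ x * ‖∇ v x‖ ^ 2 + 1 / 2 * ⟪∇ ρ x, ∇ (fun y => v y * v y) x⟫ +
      1 / 4 * (u x ^ 2 / ρ x ^ 2 * ‖∇ ρ x‖ ^ 2) := by
  have hsqrt := hρ.hasGradientAt.sqrt hρx.ne'
  rw [(hsqrt.mul hv.hasGradientAt).congr_of_eventuallyEq huv |>.gradient,
    (hv.hasGradientAt.mul hv.hasGradientAt).gradient,
    show u x = √(ρ x) * v x from huv.self_of_nhds]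
  have hr : √(ρ x) ^ 2 = ρ x := Real.sq_sqrt hρx.le
  have hr0 : √(ρ x) ≠ 0 := (Real.sqrt_pos.mpr hρx).ne'
  set r := √(ρ x)
  rw [norm_add_sq_real, norm_smul, norm_smul, norm_smul, inner_add_right]
  simp only [real_inner_smul_right, real_inner_comm (∇ ρ x), Real.norm_eq_abs, mul_pow, sq_abs]
  rw [← hr]
  field_simp
  ring

end Gradient

theorem ContDiff.div_of_tsupport_subset {E 𝕜 : Type*} [NontriviallyNormedField 𝕜]
    [NormedAddCommGroup E] [NormedSpace 𝕜 E] {n : WithTop ℕ∞} {f g : E → 𝕜} {s : Set E}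
    (hf : ContDiff 𝕜 n f) (hg : ContDiffOn 𝕜 n g s) (hs : IsOpen s) (hg0 : ∀ x ∈ s, g x ≠ 0)
    (hfs : tsupport f ⊆ s) : ContDiff 𝕜 n (fun x => f x / g x) := by
  refine contDiff_iff_contDiffAt.mpr fun x => ?_
  by_cases hx : x ∈ s
  · exact hf.contDiffAt.div (hg.contDiffAt (hs.mem_nhds hx)) (hg0 x hx)
  · have hf0 : f =ᶠ[𝓝 x] 0 := notMem_tsupport_iff_eventuallyEq.mp fun h => hx (hfs h)
    refine contDiffAt_const (c := (0 : 𝕜)).congr_of_eventuallyEq ?_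
    filter_upwards [hf0] with y hy
    simp [hy]

theorem ContinuousOn.integrableOn_of_forall_sdiff_eq_zero {X E : Type*} [TopologicalSpace X]
    [T2Space X] [MeasurableSpace X] [OpensMeasurableSpace X] [NormedAddCommGroup E]
    {μ : Measure X} [IsFiniteMeasureOnCompacts μ] {f : X → E} {s K : Set X}
    (hf : ContinuousOn f s) (hs : MeasurableSet s) (hK : IsCompact K) (hKs : K ⊆ s)
    (hf0 : ∀ x ∈ s \ K, f x = 0) : IntegrableOn f s μ :=
  ((hf.mono hKs).integrableOn_compact hK).of_forall_sdiff_eq_zero hs hf0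

theorem setIntegral_norm_gradient_sq_eq_of_eq_sqrt_mul {F : Type*} [NormedAddCommGroup F]
    [InnerProductSpace ℝ F] [CompleteSpace F] [MeasurableSpace F] [BorelSpace F]
    {μ : Measure F} [IsFiniteMeasureOnCompacts μ] {Ω : Set F} (hΩ : IsOpen Ω)
    {ρ u v : F → ℝ} (hρ : ContDiffOn ℝ 1 ρ Ω) (hρ_pos : ∀ x ∈ Ω, 0 < ρ x)
    (hv : ContDiff ℝ 1 v) (hv_supp : HasCompactSupport v) (hv_sub : tsupport v ⊆ Ω)
    (huv : ∀ x ∈ Ω, u x = √(ρ x) * v x) :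
    ∫ x in Ω, ‖∇ u x‖ ^ 2 ∂μ =
      ∫ x in Ω, ρ x * ‖∇ v x‖ ^ 2 ∂μ + 1 / 2 * ∫ x in Ω, ⟪∇ ρ x, ∇ (fun y => v y * v y) x⟫ ∂μ +
        1 / 4 * ∫ x in Ω, u x ^ 2 / ρ x ^ 2 * ‖∇ ρ x‖ ^ 2 ∂μ := by
  have hv2 : ContDiff ℝ 1 fun y => v y * v y := hv.mul hv
  have hv2_sub : tsupport (fun y => v y * v y) ⊆ tsupport v := tsupport_mul_subset_left
  have hu : ContinuousOn u Ω :=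
    ((hρ.continuousOn.sqrt).mul hv.continuous.continuousOn).congr huv
  have hintegrable {f : F → ℝ} (hf : ContinuousOn f Ω) (hf0 : ∀ x ∈ Ω \ tsupport v, f x = 0) :
      IntegrableOn f Ω μ :=
    hf.integrableOn_of_forall_sdiff_eq_zero hΩ.measurableSet hv_supp hv_sub hf0
  have i₁ : IntegrableOn (fun x => ρ x * ‖∇ v x‖ ^ 2) Ω μ :=
    hintegrable (hρ.continuousOn.mul (hv.continuous_gradient.continuousOn.norm.pow 2))
      fun x hx => by simp [gradient_of_notMem_tsupport hx.2]
  have i₂ : IntegrableOn (fun x => ⟪∇ ρ x, ∇ (fun y => v y * v y) x⟫) Ω μ :=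
    hintegrable ((hρ.continuousOn_gradient hΩ).inner hv2.continuous_gradient.continuousOn)
      fun x hx => by simp [gradient_of_notMem_tsupport fun h => hx.2 (hv2_sub h)]
  have i₃ : IntegrableOn (fun x => u x ^ 2 / ρ x ^ 2 * ‖∇ ρ x‖ ^ 2) Ω μ :=
    hintegrable (((hu.pow 2).div (hρ.continuousOn.pow 2)
      fun x hx => pow_ne_zero 2 (hρ_pos x hx).ne').mul ((hρ.continuousOn_gradient hΩ).norm.pow 2))
      fun x hx => by simp [huv x hx.1, image_eq_zero_of_notMem_tsupport hx.2]
  have hpointwise : ∀ x ∈ Ω, ‖∇ u x‖ ^ 2 = ρ x * ‖∇ v x‖ ^ 2 +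
      1 / 2 * ⟪∇ ρ x, ∇ (fun y => v y * v y) x⟫ + 1 / 4 * (u x ^ 2 / ρ x ^ 2 * ‖∇ ρ x‖ ^ 2) :=
    fun x hx => norm_gradient_sq_eq_of_eventuallyEq_sqrt_mul
      ((hρ.contDiffAt (hΩ.mem_nhds hx)).differentiableAt one_ne_zero) (hρ_pos x hx)
      (hv.differentiable one_ne_zero x) (eventually_of_mem (hΩ.mem_nhds hx) huv)
  rw [setIntegral_congr_fun hΩ.measurableSet hpointwise, integral_add _ (i₃.const_mul _),
    integral_add i₁ (i₂.const_mul _), integral_const_mul, integral_const_mul]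
  exact i₁.add (i₂.const_mul _)

theorem stmt10_general {N : ℕ}
    (Ω : Set (EuclideanSpace ℝ (Fin N))) (hΩ : IsOpen Ω)
    (ρ : EuclideanSpace ℝ (Fin N) → ℝ)
    (hρ : ContDiffOn ℝ 1 ρ Ω)
    (hρ_pos : ∀ x ∈ Ω, 0 < ρ x)
    (hρ_sh : ∀ φ : EuclideanSpace ℝ (Fin N) → ℝ,
      ContDiff ℝ 1 φ → HasCompactSupport φ → tsupport φ ⊆ Ω → (∀ x, 0 ≤ φ x) →
      0 ≤ ∫ x in Ω, ⟪gradient ρ x, gradient φ x⟫)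
    (Λ : ℝ)
    (hΛ_ineq : ∀ u : EuclideanSpace ℝ (Fin N) → ℝ,
      ContDiff ℝ 1 u → HasCompactSupport u → tsupport u ⊆ Ω →
      Λ * ∫ x in Ω, ρ x * u x ^ 2 ≤ ∫ x in Ω, ρ x * ‖gradient u x‖ ^ 2)
    (u : EuclideanSpace ℝ (Fin N) → ℝ)
    (hu : ContDiff ℝ 1 u) (hu_supp : HasCompactSupport u)
    (hu_sub : tsupport u ⊆ Ω) :
    (1 / 4) * (∫ x in Ω, (u x ^ 2 / ρ x ^ 2) * ‖gradient ρ x‖ ^ 2) +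
        Λ * ∫ x in Ω, u x ^ 2 ≤
      ∫ x in Ω, ‖gradient u x‖ ^ 2 := by
  set v := fun x => u x / √(ρ x)
  have hv : ContDiff ℝ 1 v := hu.div_of_tsupport_subset (hρ.sqrt fun x hx => (hρ_pos x hx).ne')
    hΩ (fun x hx => (Real.sqrt_pos.mpr (hρ_pos x hx)).ne') hu_sub
  have hv_sub : tsupport v ⊆ tsupport u :=
    closure_mono fun x hx hux => hx (by simp [v, hux])
  have hv_supp : HasCompactSupport v := hu_supp.of_isClosed_subset (isClosed_tsupport v) hv_sub
  have huv : ∀ x ∈ Ω, u x = √(ρ x) * v x := fun x hx =>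
    (mul_div_cancel₀ (u x) (Real.sqrt_pos.mpr (hρ_pos x hx)).ne').symm
  have hρv : ∫ x in Ω, ρ x * v x ^ 2 = ∫ x in Ω, u x ^ 2 :=
    setIntegral_congr_fun hΩ.measurableSet fun x hx => by
      rw [huv x hx, mul_pow, Real.sq_sqrt (hρ_pos x hx).le]
  rw [setIntegral_norm_gradient_sq_eq_of_eq_sqrt_mul hΩ hρ hρ_pos hv hv_supp
    (hv_sub.trans hu_sub) huv]
  have hweighted := hΛ_ineq v hv hv_supp (hv_sub.trans hu_sub)
  have hsuperharmonic := hρ_sh (fun y => v y * v y) (hv.mul hv) hv_supp.mul_right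
    (tsupport_mul_subset_left.trans (hv_sub.trans hu_sub)) fun x => mul_self_nonneg (v x)
  rw [hρv] at hweighted
  linarith

theorem stmt10 {N : ℕ} (hN : 1 ≤ N)
    (Ω : Set (EuclideanSpace ℝ (Fin N))) (hΩ : IsOpen Ω)
    (ρ : EuclideanSpace ℝ (Fin N) → ℝ)
    (hρ : ContDiffOn ℝ 1 ρ Ω)
    (hρ_pos : ∀ x ∈ Ω, 0 < ρ x)
    (hρ_sh : ∀ φ : EuclideanSpace ℝ (Fin N) → ℝ,
      ContDiff ℝ 1 φ → HasCompactSupport φ → tsupport φ ⊆ Ω → (∀ x, 0 ≤ φ x) →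
      0 ≤ ∫ x in Ω, ⟪gradient ρ x, gradient φ x⟫)
    (Λ : ℝ) (hΛ : 0 < Λ)
    (hΛ_ineq : ∀ u : EuclideanSpace ℝ (Fin N) → ℝ,
      ContDiff ℝ 1 u → HasCompactSupport u → tsupport u ⊆ Ω →
      Λ * ∫ x in Ω, ρ x * u x ^ 2 ≤ ∫ x in Ω, ρ x * ‖gradient u x‖ ^ 2)
    (u : EuclideanSpace ℝ (Fin N) → ℝ)
    (hu : ContDiff ℝ 1 u) (hu_supp : HasCompactSupport u)
    (hu_sub : tsupport u ⊆ Ω) :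
    (1 / 4) * (∫ x in Ω, (u x ^ 2 / ρ x ^ 2) * ‖gradient ρ x‖ ^ 2) +
        Λ * ∫ x in Ω, u x ^ 2 ≤
      ∫ x in Ω, ‖gradient u x‖ ^ 2 :=
  stmt10_general Ω hΩ ρ hρ hρ_pos hρ_sh Λ hΛ_ineq u hu hu_supp hu_sub
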